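/- Let q be a prime power, let F_q be a finite field with q elements, and let n, k, δ, α be positive integers with 1 ≤ k < n, 1 ≤ δ ≤ n − k, and α ≥ 2. Then B_q(n,k,δ;α) = A_q(n, n−k, n−k−δ+1; α−1), i.e., the maximum cardinality of an α-(n,k,δ)^c_q covering Grassmannian code equals the maximum cardinality of an (n−k−δ+1)-(n, n−k, α−1)^m_q multiple Grassmannian code. -/

import Mathlib

open scoped Classical

/-- `C` is an `a`-`(n,k,d)^c_q` covering Grassmannian code: a set of
`k`-dimensional subspaces of `F^n` such that every `a` distinct codewords
span a subspace of dimension at least `d + k`. -/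
def IsCoveringCode (F : Type*) [Field F] (n k d a : ℕ)
    (C : Finset (Submodule F (Fin n → F))) : Prop :=
  (∀ V ∈ C, Module.finrank F V = k) ∧
  ∀ S ⊆ C, S.card = a → d + k ≤ Module.finrank F ↥(S.sup id)

/-- `Bq F n k d a` is the maximum cardinality of an `a`-`(n,k,d)^c_q`
covering Grassmannian code (no repeated codewords). -/
noncomputable def Bq (F : Type*) [Field F] (n k d a : ℕ) : ℕ :=
  sSup {m | ∃ C : Finset (Submodule F (Fin n → F)), IsCoveringCode F n k d a C ∧ C.card = m}

/-- `C` is a `t`-`(n,k,l)^m_q` multiple Grassmannian code: a set of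
`k`-dimensional subspaces of `F^n` such that every `t`-dimensional subspace
of `F^n` is contained in at most `l` codewords. -/
def IsMultipleCode (F : Type*) [Field F] (n k t l : ℕ)
    (C : Finset (Submodule F (Fin n → F))) : Prop :=
  (∀ V ∈ C, Module.finrank F V = k) ∧
  ∀ T : Submodule F (Fin n → F), Module.finrank F T = t →
    (C.filter fun V => T ≤ V).card ≤ l

/-- `Aq F n k t l` is the maximum cardinality of a `t`-`(n,k,l)^m_q`
multiple Grassmannian code (no repeated codewords). -/
noncomputable def Aq (F : Type*) [Field F] (n k t l : ℕ) : ℕ :=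
  sSup {m | ∃ C : Finset (Submodule F (Fin n → F)), IsMultipleCode F n k t l C ∧ C.card = m}

/-! Orthogonal complement with respect to a nondegenerate reflexive bilinear form is an
inclusion-reversing involution on subspaces of `F^n` sending dimension `k` to `n - k`.
Codewords `W₁, …, Wₐ` span a space of dimension `< d + k` exactly when the complement of the span,
`W₁^⊥ ⊓ ⋯ ⊓ Wₐ^⊥`, has dimension `≥ n - k - d + 1`, i.e. contains an `(n - k - d + 1)`-space `T`.
Hence `C` is an `a`-covering code iff no such `T` lies in `a` members of `C^⊥`, i.e. iff `C^⊥`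
is a multiple code with `λ = a - 1`; so `C ↦ C^⊥` matches the two families of codes. -/

open Module Finset
open LinearMap (BilinForm)

theorem Finset.le_card_filter_iff_exists_subset {α : Type*} {s : Finset α} {p : α → Prop}
    [DecidablePred p] {m : ℕ} : m ≤ #(s.filter p) ↔ ∃ t ⊆ s, #t = m ∧ ∀ x ∈ t, p x := by
  rw [le_card_iff_exists_subset_card]
  constructor
  · rintro ⟨t, hts, rfl⟩
    exact ⟨t, hts.trans (filter_subset p s), rfl, fun x hx => (mem_filter.1 (hts hx)).2⟩
  · rintro ⟨t, hts, rfl, hp⟩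
    exact ⟨t, fun x hx => mem_filter.2 ⟨hts hx, hp x hx⟩, rfl⟩

theorem Submodule.exists_le_finrank_eq {K V : Type*} [DivisionRing K] [AddCommGroup V]
    [Module K V] (U : Submodule K V) {t : ℕ} (ht : t ≤ finrank K U) :
    ∃ T ≤ U, finrank K T = t := by
  obtain ⟨f, hf⟩ := exists_linearIndependent_of_le_finrank ht
  refine ⟨span K (Set.range (U.subtype ∘ f)), ?_, ?_⟩
  · rw [Submodule.span_le]
    rintro - ⟨i, rfl⟩
    exact (f i).2
  · rw [finrank_span_eq_card (hf.map' U.subtype U.ker_subtype), Fintype.card_fin]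

namespace LinearMap.BilinForm

variable {K V : Type*} [Field K] [AddCommGroup V] [Module K V] {B : BilinForm K V}

theorem IsRefl.le_orthogonal_comm (hB : B.IsRefl) {N L : Submodule K V} :
    N ≤ B.orthogonal L ↔ L ≤ B.orthogonal N :=
  ⟨fun h _ hl _ hn => hB _ _ (h hn _ hl), fun h _ hn _ hl => hB _ _ (h hl _ hn)⟩

theorem IsRefl.le_orthogonal_finsetSup_iff (hB : B.IsRefl) {N : Submodule K V} {ι : Type*}
    (s : Finset ι) (f : ι → Submodule K V) :
    N ≤ B.orthogonal (s.sup f) ↔ ∀ i ∈ s, N ≤ B.orthogonal (f i) := by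
  rw [hB.le_orthogonal_comm, Finset.sup_le_iff]
  exact forall₂_congr fun _ _ => hB.le_orthogonal_comm.symm

variable [FiniteDimensional K V]

theorem orthogonal_involutive (hB : B.Nondegenerate) (hR : B.IsRefl) :
    Function.Involutive B.orthogonal :=
  orthogonal_orthogonal hB hR

theorem finrank_lt_iff_exists_le_orthogonal (hB : B.Nondegenerate) {m : ℕ}
    (hm : m ≤ finrank K V) (W : Submodule K V) :
    finrank K W < m ↔
      ∃ T : Submodule K V, finrank K T = finrank K V - m + 1 ∧ T ≤ B.orthogonal W := by
  have hW := W.finrank_le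
  constructor
  · intro h
    obtain ⟨T, hT, hTrank⟩ := (B.orthogonal W).exists_le_finrank_eq
      (t := finrank K V - m + 1) (by rw [finrank_orthogonal hB]; omega)
    exact ⟨T, hTrank, hT⟩
  · rintro ⟨T, hTrank, hT⟩
    have := Submodule.finrank_mono hT
    rw [finrank_orthogonal hB] at this
    omega

end LinearMap.BilinForm

section GrassmannianCode

variable {F : Type*} [Field F] {n k d a : ℕ} {B : BilinForm F (Fin n → F)}

theorem forall_finrank_image_orthogonal_iff (hB : B.Nondegenerate) (hkn : k ≤ n)
    (C : Finset (Submodule F (Fin n → F))) :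
    (∀ V ∈ C.image B.orthogonal, finrank F V = n - k) ↔ ∀ W ∈ C, finrank F W = k := by
  refine forall_mem_image.trans (forall₂_congr fun W _ => ?_)
  have := W.finrank_le
  rw [B.finrank_orthogonal hB, finrank_fin_fun] at *
  omega

theorem card_filter_image_orthogonal (hB : B.Nondegenerate) (hR : B.IsRefl)
    (C : Finset (Submodule F (Fin n → F))) (T : Submodule F (Fin n → F)) :
    #((C.image B.orthogonal).filter (T ≤ ·)) = #(C.filter (T ≤ B.orthogonal ·)) := by
  rw [filter_image, card_image_of_injective _ (B.orthogonal_involutive hB hR).injective]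

theorem isCoveringCode_iff_isMultipleCode_image_orthogonal (hB : B.Nondegenerate)
    (hR : B.IsRefl) (hkd : k + d ≤ n) (ha : 1 ≤ a) (C : Finset (Submodule F (Fin n → F))) :
    IsCoveringCode F n k d a C ↔
      IsMultipleCode F n (n - k) (n - k - d + 1) (a - 1) (C.image B.orthogonal) := by
  refine and_congr (forall_finrank_image_orthogonal_iff hB (by omega) C).symm ?_
  have hdim : finrank F (Fin n → F) - (d + k) + 1 = n - k - d + 1 := by
    rw [finrank_fin_fun]; omega
  have hlt (S : Finset (Submodule F (Fin n → F))) := B.finrank_lt_iff_exists_le_orthogonal hB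
    (m := d + k) (by rw [finrank_fin_fun]; omega) (S.sup id)
  rw [hdim] at hlt
  calc (∀ S ⊆ C, #S = a → d + k ≤ finrank F ↥(S.sup id))
      ↔ ¬ ∃ S ⊆ C, #S = a ∧ finrank F ↥(S.sup id) < d + k := by
        simp only [not_exists, not_and, not_lt]
    _ ↔ ¬ ∃ S ⊆ C, #S = a ∧ ∃ T : Submodule F (Fin n → F),
          finrank F T = n - k - d + 1 ∧ ∀ W ∈ S, T ≤ B.orthogonal W := by
        simp only [hlt, hR.le_orthogonal_finsetSup_iff, id]
    _ ↔ ¬ ∃ T : Submodule F (Fin n → F), finrank F T = n - k - d + 1 ∧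
          a ≤ #(C.filter (T ≤ B.orthogonal ·)) := by
        simp only [le_card_filter_iff_exists_subset]
        aesop
    _ ↔ _ := by
        simp only [card_filter_image_orthogonal hB hR, not_exists, not_and, not_le]
        exact forall₂_congr fun _ _ => by omega

end GrassmannianCode

theorem exists_bilinForm_nondegenerate_isRefl (F ι : Type*) [Field F] [Fintype ι]
    [DecidableEq ι] : ∃ B : BilinForm F (ι → F), B.Nondegenerate ∧ B.IsRefl :=
  ⟨Matrix.toLinearMap₂' F 1, (Matrix.nondegenerate_of_det_ne_zero (by simp)).toLinearMap₂',
    fun x y h => by simpa [Matrix.toLinearMap₂'_apply', dotProduct_comm] using h⟩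

theorem stmt5_general (F : Type) [Field F] (n k d a : ℕ) (hkn : k < n) (hdn : d ≤ n - k) (ha : 2 ≤ a) :
    Bq F n k d a = Aq F n (n - k) (n - k - d + 1) (a - 1) := by
  obtain ⟨B, hB, hR⟩ := exists_bilinForm_nondegenerate_isRefl F (Fin n)
  have horth := B.orthogonal_involutive hB hR
  have hcode := isCoveringCode_iff_isMultipleCode_image_orthogonal hB hR
    (k := k) (d := d) (a := a) (by omega) (by omega)
  unfold Bq Aq
  congr 1
  ext m
  constructor
  · rintro ⟨C, hC, rfl⟩
    exact ⟨C.image B.orthogonal, (hcode C).1 hC, card_image_of_injective _ horth.injective⟩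
  · rintro ⟨D, hD, rfl⟩
    refine ⟨D.image B.orthogonal, (hcode _).2 ?_, card_image_of_injective _ horth.injective⟩
    rwa [image_image, horth.comp_self, image_id]

/-- `B_q(n,k,d;a) = A_q(n, n-k, n-k-d+1; a-1)`: the maximum cardinality of an
`a`-`(n,k,d)^c_q` covering Grassmannian code equals the maximum cardinality of
an `(n-k-d+1)`-`(n, n-k, a-1)^m_q` multiple Grassmannian code. -/
theorem stmt5 (q : ℕ) (hq : IsPrimePow q) (F : Type) [Field F] [Fintype F]
    (hF : Fintype.card F = q) (n k d a : ℕ)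
    (hk : 1 ≤ k) (hkn : k < n) (hd : 1 ≤ d) (hdn : d ≤ n - k) (ha : 2 ≤ a) :
    Bq F n k d a = Aq F n (n - k) (n - k - d + 1) (a - 1) :=
  stmt5_general F n k d a hkn hdn ha
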